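/- arXiv:1403.1118 — 10 statements merged into one kernel-verified Lean document; each statement's English description precedes it below -/
import Mathlib

section
/- Let m be even and A an m-th order n-dimensional real P tensor. Then every H-eigenvalue of A is positive, i.e., if lambda is real with a nonzero real vector x satisfying (A x^{m-1})_i = lambda x_i^{m-1} for all i, then lambda > 0. -/
open Finset

noncomputable section

/-- The contraction `(A x^{m})_i` of an order-`m+1` tensor with `m` copies of `x`. -/
def contrT {m n : ℕ} (A : (Fin (m+1) → Fin n) → ℝ) (x : Fin n → ℝ) (i : Fin n) : ℝ :=
  ∑ f : Fin m → Fin n, A (Fin.cons i f) * ∏ k, x (f k)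

/-- `A x^M` for an order-`M` tensor. -/
def polyT {M n : ℕ} (A : (Fin M → Fin n) → ℝ) (x : Fin n → ℝ) : ℝ :=
  ∑ f : Fin M → Fin n, A f * ∏ k, x (f k)

/-- P tensor: for every nonzero `x`, `max_i x_i (A x^{m-1})_i > 0`. -/
def IsPTensor {m n : ℕ} (A : (Fin (m+1) → Fin n) → ℝ) : Prop :=
  ∀ x : Fin n → ℝ, x ≠ 0 → ∃ i : Fin n, 0 < x i * contrT A x i

/-- P₀ tensor: for every nonzero `x` there is `i` with `x i ≠ 0` and `x_i (A x^{m-1})_i ≥ 0`. -/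
def IsP0Tensor {m n : ℕ} (A : (Fin (m+1) → Fin n) → ℝ) : Prop :=
  ∀ x : Fin n → ℝ, x ≠ 0 → ∃ i : Fin n, x i ≠ 0 ∧ 0 ≤ x i * contrT A x i

def infNorm {n : ℕ} (x : Fin n → ℝ) : ℝ := ⨆ i, |x i|

/-- The operator `T_A(x) = ‖x‖₂^{2-m} A x^{m-1}` (order of the tensor is `m+1`). -/
def TA {m n : ℕ} (A : (Fin (m+1) → Fin n) → ℝ) (x : Fin n → ℝ) (i : Fin n) : ℝ :=
  if x = 0 then 0
  else (Real.sqrt (∑ j, x j ^ 2)) ^ ((2 : ℤ) - ((m : ℤ) + 1)) * contrT A x i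

/-- `α(T_A) = min_{‖x‖_∞ = 1} max_i x_i (T_A(x))_i`. -/
def alphaT {m n : ℕ} (A : (Fin (m+1) → Fin n) → ℝ) : ℝ :=
  sInf ((fun x => ⨆ i, x i * TA A x i) '' {x : Fin n → ℝ | infNorm x = 1})

/-- B tensor of order `m+1`. -/
def IsBTensor {m n : ℕ} (B : (Fin (m+1) → Fin n) → ℝ) : Prop :=
  ∀ i : Fin n, (0 < ∑ f : Fin m → Fin n, B (Fin.cons i f)) ∧
    ∀ g : Fin m → Fin n, g ≠ (fun _ => i) →
      B (Fin.cons i g) < (1 / (n : ℝ) ^ m) * ∑ f : Fin m → Fin n, B (Fin.cons i f)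

/-- B₀ tensor of order `m+1`. -/
def IsB0Tensor {m n : ℕ} (B : (Fin (m+1) → Fin n) → ℝ) : Prop :=
  ∀ i : Fin n, (0 ≤ ∑ f : Fin m → Fin n, B (Fin.cons i f)) ∧
    ∀ g : Fin m → Fin n, g ≠ (fun _ => i) →
      B (Fin.cons i g) ≤ (1 / (n : ℝ) ^ m) * ∑ f : Fin m → Fin n, B (Fin.cons i f)

theorem stmt1 (m n : ℕ) (hm : Even (m + 1))
    (A : (Fin (m+1) → Fin n) → ℝ) (hP : IsPTensor A)
    (lam : ℝ) (x : Fin n → ℝ) (hx : x ≠ 0)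
    (heig : ∀ i, contrT A x i = lam * x i ^ m) :
    0 < lam := by
  obtain ⟨i, hi⟩ := hP x hx
  have hi' : 0 < lam * x i ^ (m + 1) := by
    simpa only [heig i, pow_succ', mul_left_comm] using hi
  exact pos_of_mul_pos_left hi' (hm.pow_nonneg _)
end
end

section
/- Let m be even and A an m-th order n-dimensional real P_0 tensor. Then every H-eigenvalue of A is nonnegative. -/
open Finset

noncomputable section

theorem stmt2 (m n : ℕ) (hm : Even (m + 1))
    (A : (Fin (m+1) → Fin n) → ℝ) (hP0 : IsP0Tensor A)
    (lam : ℝ) (x : Fin n → ℝ) (hx : x ≠ 0)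
    (heig : ∀ i, contrT A x i = lam * x i ^ m) :
    0 ≤ lam := by
  obtain ⟨i, hxi, hnonneg⟩ := hP0 x hx
  have hprod : 0 ≤ lam * x i ^ (m + 1) :=
    calc 0 ≤ x i * contrT A x i := hnonneg
      _ = lam * x i ^ (m + 1) := by rw [heig i]; ring
  exact nonneg_of_mul_nonneg_left hprod (hm.pow_pos hxi)
end
end

section
/- If A is an m-th order n-dimensional real P tensor, then every Z-eigenvalue of A is positive: if lambda is real with real x satisfying A x^{m-1} = lambda x and x^T x = 1, then lambda > 0. -/
open Finset

noncomputable section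

theorem IsPTensor.eigenvalue_pos {m n : ℕ} {A : (Fin (m+1) → Fin n) → ℝ} (hP : IsPTensor A)
    {lam : ℝ} {x : Fin n → ℝ} (hx : x ≠ 0) (heig : ∀ i, contrT A x i = lam * x i) :
    0 < lam := by
  obtain ⟨i, hi⟩ := hP x hx
  have h : 0 < lam * x i ^ 2 := by
    rw [heig i] at hi
    linarith
  exact pos_of_mul_pos_left h (sq_nonneg _)

theorem ne_zero_of_sum_sq_eq_one {n : ℕ} {x : Fin n → ℝ} (hunit : ∑ i, x i ^ 2 = 1) : x ≠ 0 := by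
  rintro rfl
  simp at hunit

theorem stmt3 (m n : ℕ)
    (A : (Fin (m+1) → Fin n) → ℝ) (hP : IsPTensor A)
    (lam : ℝ) (x : Fin n → ℝ) (hunit : ∑ i, x i ^ 2 = 1)
    (heig : ∀ i, contrT A x i = lam * x i) :
    0 < lam :=
  hP.eigenvalue_pos (ne_zero_of_sum_sq_eq_one hunit) heig
end
end

section
/- If m is odd and A is an m-th order n-dimensional real P_0 tensor, then every Z-eigenvalue of A is zero. -/
open Finset

noncomputable section

/-!
For even `m` the contraction `x ↦ A x^m` is an even map, so an eigenpair `(λ, x)` yields the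
eigenpair `(-λ, -x)`. Testing the P₀ property on an eigenvector `x` shows `0 ≤ λ · x_i²` for some
`x_i ≠ 0`, so both `λ` and `-λ` are nonnegative.
-/

theorem contrT_smul {m n : ℕ} (A : (Fin (m+1) → Fin n) → ℝ) (c : ℝ) (x : Fin n → ℝ) (i : Fin n) :
    contrT A (c • x) i = c ^ m * contrT A x i := by
  simp only [contrT, Pi.smul_apply, smul_eq_mul, prod_mul_distrib, prod_const, card_univ,
    Fintype.card_fin, mul_sum]
  exact sum_congr rfl fun _ _ => by ring

theorem contrT_neg_of_even {m n : ℕ} (hm : Even m) (A : (Fin (m+1) → Fin n) → ℝ)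
    (x : Fin n → ℝ) (i : Fin n) : contrT A (-x) i = contrT A x i := by
  rw [← neg_one_smul ℝ x, contrT_smul, hm.neg_one_pow, one_mul]

theorem IsP0Tensor.eigenvalue_nonneg {m n : ℕ} {A : (Fin (m+1) → Fin n) → ℝ}
    (hA : IsP0Tensor A) {lam : ℝ} {x : Fin n → ℝ} (hx : x ≠ 0)
    (heig : ∀ i, contrT A x i = lam * x i) : 0 ≤ lam := by
  obtain ⟨i, hxi, hi⟩ := hA x hx
  rw [heig, mul_left_comm, ← sq] at hi
  exact nonneg_of_mul_nonneg_left hi (by positivity)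

theorem stmt5 (m n : ℕ) (hm : Odd (m + 1))
    (A : (Fin (m+1) → Fin n) → ℝ) (hP0 : IsP0Tensor A)
    (lam : ℝ) (x : Fin n → ℝ) (hunit : ∑ i, x i ^ 2 = 1)
    (heig : ∀ i, contrT A x i = lam * x i) :
    lam = 0 := by
  have hm' : Even m := Nat.not_odd_iff_even.1 (Nat.odd_add_one.1 hm)
  have hx : x ≠ 0 := by
    rintro rfl
    simp at hunit
  have hneg : 0 ≤ -lam := hP0.eigenvalue_nonneg (neg_ne_zero.2 hx) fun i => by
    rw [contrT_neg_of_even hm', heig, Pi.neg_apply, neg_mul_neg]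
  linarith [hP0.eigenvalue_nonneg hx heig]
end
end

section
/- There does not exist an odd order symmetric P tensor. Equivalently, if m >= 3 is odd and n >= 1, no symmetric tensor A in S_{m,n} satisfies: for every nonzero x in R^n, max_i x_i (A x^{m-1})_i > 0. -/
/-!
At `x = c • eⱼ` with `c = ±1` only the `j`-th product `xᵢ (A x^{m-1})ᵢ` can be nonzero, and
since `A x^{m-1}` is homogeneous of even degree, that product is `c · A_{j…j}`. The P condition
at `eⱼ` and at `-eⱼ` then forces `A_{j…j}` to be both positive and negative.
-/

open Finset

noncomputable section

theorem IsPTensor.pos_at_single {m n : ℕ} {A : (Fin (m+1) → Fin n) → ℝ} (hA : IsPTensor A)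
    (j : Fin n) {c : ℝ} (hc : c ≠ 0) : 0 < c * contrT A (Pi.single j c) j := by
  obtain ⟨i, hi⟩ := hA (Pi.single j c) (by simpa using hc)
  obtain rfl : i = j := by
    by_contra hij
    simp [Pi.single_eq_of_ne hij] at hi
  simpa using hi

theorem stmt6_general (m n : ℕ) (hm : Odd (m + 1)) (hn : 1 ≤ n)
    (A : (Fin (m+1) → Fin n) → ℝ) :
    ¬ IsPTensor A := by
  intro hP
  have hm_even : Even m := by simpa [Nat.odd_add_one] using hm
  let j : Fin n := ⟨0, hn⟩
  have h_pos := hP.pos_at_single j one_ne_zero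
  have h_neg := hP.pos_at_single j (neg_ne_zero.mpr one_ne_zero)
  rw [Pi.single_neg, contrT_neg_of_even hm_even] at h_neg
  linarith

theorem stmt6 (m n : ℕ) (hm : Odd (m + 1)) (hm3 : 3 ≤ m + 1) (hn : 1 ≤ n)
    (A : (Fin (m+1) → Fin n) → ℝ)
    (hsym : ∀ (σ : Equiv.Perm (Fin (m+1))) (f : Fin (m+1) → Fin n), A (f ∘ σ) = A f) :
    ¬ IsPTensor A :=
  stmt6_general m n hm hn A
end
end

section
/- If m is odd and A is a symmetric P_0 tensor of order m and dimension n, then A is the zero tensor. -/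
open Finset

noncomputable section

/-!
For symmetric `A` the gradient of the form `x ↦ A x^(m+1)` is `(m+1) A x^m`, so by Lagrange
multipliers a minimiser `a` of the form on the Euclidean unit sphere is a Z-eigenvector,
`A a^m = μ a`. The P₀ condition at `a` gives `μ ≥ 0`, so the minimum `A a^(m+1) = μ` is
nonnegative. For odd order the form is odd, hence it vanishes on the sphere and, by homogeneity,
everywhere; and a symmetric tensor with vanishing form is zero (differentiate and induct on the
order).
-/

def IsSymmTensor {M n : ℕ} (A : (Fin M → Fin n) → ℝ) : Prop :=
  ∀ (σ : Equiv.Perm (Fin M)) (f : Fin M → Fin n), A (f ∘ σ) = A f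

section PolyT

variable {M n : ℕ}

lemma contDiff_polyT (A : (Fin M → Fin n) → ℝ) : ContDiff ℝ 1 (polyT A) := by
  unfold polyT
  fun_prop

lemma polyT_smul (A : (Fin M → Fin n) → ℝ) (c : ℝ) (x : Fin n → ℝ) :
    polyT A (c • x) = c ^ M * polyT A x := by
  simp only [polyT, mul_sum, Pi.smul_apply, smul_eq_mul, prod_mul_distrib, prod_const,
    card_univ, Fintype.card_fin]
  exact sum_congr rfl fun f _ => by ring

lemma polyT_neg_of_odd (hM : Odd M) (A : (Fin M → Fin n) → ℝ) (x : Fin n → ℝ) :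
    polyT A (-x) = -polyT A x := by
  rw [← neg_one_smul ℝ x, polyT_smul, hM.neg_one_pow, neg_one_mul]

lemma polyT_zero (hM : M ≠ 0) (A : (Fin M → Fin n) → ℝ) : polyT A 0 = 0 := by
  simpa [zero_pow hM] using polyT_smul A 0 0

lemma polyT_eq_sum_mul_contrT (A : (Fin (M+1) → Fin n) → ℝ) (x : Fin n → ℝ) :
    polyT A x = ∑ i, x i * contrT A x i := by
  simp only [polyT, contrT, mul_sum, ← (Fin.consEquiv fun _ => Fin n).sum_comp,
    Fintype.sum_prod_type]
  refine sum_congr rfl fun i _ => sum_congr rfl fun g _ => ?_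
  simp only [Fin.consEquiv, Equiv.coe_fn_mk, Fin.prod_univ_succ, Fin.cons_zero, Fin.cons_succ]
  ring

lemma hasLineDerivAt_polyT (A : (Fin M → Fin n) → ℝ) (x v : Fin n → ℝ) :
    HasLineDerivAt ℝ (polyT A)
      (∑ f, A f * ∑ k, (∏ k' ∈ univ.erase k, x (f k')) * v (f k)) x v := by
  unfold HasLineDerivAt polyT
  refine HasDerivAt.fun_sum fun f _ => ?_
  have hline (k : Fin M) : HasDerivAt (fun t : ℝ => x (f k) + t * v (f k)) (v (f k)) 0 := by
    simpa using ((hasDerivAt_id (0:ℝ)).mul_const (v (f k))).const_add (x (f k))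
  simpa using ((HasDerivAt.fun_finsetProd fun k _ => hline k).const_mul (A f))

end PolyT

namespace IsSymmTensor

variable {M n : ℕ} {A : (Fin (M+1) → Fin n) → ℝ}

lemma sum_mul_prod_erase_eq (hA : IsSymmTensor A) (x v : Fin n → ℝ) (k : Fin (M+1)) :
    ∑ f, A f * ((∏ k' ∈ univ.erase k, x (f k')) * v (f k)) = ∑ i, v i * contrT A x i := by
  have hswap : ∑ f, A f * ((∏ k' ∈ univ.erase k, x (f k')) * v (f k))
      = ∑ f, A f * ((∏ k' ∈ univ.erase 0, x (f k')) * v (f 0)) := by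
    let τ := Equiv.swap 0 k
    refine (Fintype.sum_equiv (τ.arrowCongr (Equiv.refl _)) _ _ fun f => ?_).symm
    have hprod : ∏ k' ∈ univ.erase k, x (f (τ k')) = ∏ k' ∈ univ.erase 0, x (f k') :=
      prod_equiv τ (by simp [τ, Equiv.swap_apply_eq_iff]) (by simp)
    have hτ : τ.arrowCongr (Equiv.refl _) f = f ∘ τ := by
      ext j
      simp [τ, Equiv.arrowCongr_apply]
    simp [hτ, hA τ f, hprod, τ]
  rw [hswap, ← (Fin.consEquiv fun _ => Fin n).sum_comp, Fintype.sum_prod_type]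
  refine sum_congr rfl fun i _ => ?_
  simp only [contrT, mul_sum]
  refine sum_congr rfl fun g _ => ?_
  rw [← compl_singleton, ← Fin.image_succ_univ, prod_image (Fin.succ_injective _).injOn]
  simp only [Fin.consEquiv, Equiv.coe_fn_mk, Fin.cons_zero, Fin.cons_succ]
  ring

lemma hasLineDerivAt_polyT (hA : IsSymmTensor A) (x v : Fin n → ℝ) :
    HasLineDerivAt ℝ (polyT A) ((M + 1) * ∑ i, v i * contrT A x i) x v := by
  have hsum : ∑ f, A f * ∑ k, (∏ k' ∈ univ.erase k, x (f k')) * v (f k)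
      = ∑ _k : Fin (M+1), ∑ i, v i * contrT A x i := by
    simp_rw [mul_sum]
    rw [sum_comm]
    exact sum_congr rfl fun k _ => hA.sum_mul_prod_erase_eq x v k
  convert _root_.hasLineDerivAt_polyT A x v using 1
  simp [hsum]

lemma cons (hA : IsSymmTensor A) (i : Fin n) :
    IsSymmTensor fun g : Fin M → Fin n => A (Fin.cons i g) := by
  intro σ g
  have hcomp : (Fin.cons i (g ∘ σ) : Fin (M+1) → Fin n)
      = Fin.cons i g ∘ Equiv.Perm.decomposeFin.symm (0, σ) := by
    ext k
    refine Fin.cases ?_ (fun j => ?_) k <;> simp [Equiv.Perm.decomposeFin_symm_apply_succ]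
  exact (congrArg A hcomp).trans (hA _ _)

lemma contrT_eq_zero_of_polyT_eq_zero (hA : IsSymmTensor A)
    (h : ∀ x, polyT A x = 0) (x : Fin n → ℝ) (i : Fin n) : contrT A x i = 0 := by
  have hzero : HasLineDerivAt ℝ (polyT A) 0 x (Pi.single i 1) := by
    simpa [HasLineDerivAt, h] using hasDerivAt_const (0 : ℝ) (0 : ℝ)
  have hderiv := (hA.hasLineDerivAt_polyT x (Pi.single i 1)).unique hzero
  simpa [Pi.single_apply, Nat.cast_add_one_ne_zero] using hderiv

theorem eq_zero_of_polyT_eq_zero :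
    ∀ {M : ℕ} {A : (Fin M → Fin n) → ℝ}, IsSymmTensor A → (∀ x, polyT A x = 0) → A = 0
  | 0, A, _, h => by
    funext f
    simpa [polyT, Subsingleton.elim f default] using h 0
  | _ + 1, A, hA, h => by
    have hslice (i : Fin n) : (fun g => A (Fin.cons i g)) = 0 :=
      eq_zero_of_polyT_eq_zero (hA.cons i) (hA.contrT_eq_zero_of_polyT_eq_zero h · i)
    funext f
    simpa [Fin.cons_self_tail] using congrFun (hslice (f 0)) (Fin.tail f)

end IsSymmTensor

/-- The Euclidean unit sphere; `Fin n → ℝ` itself carries the sup norm. -/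
def unitSphere (n : ℕ) : Set (Fin n → ℝ) := {x | ∑ j, x j ^ 2 = 1}

section UnitSphere

variable {n : ℕ}

lemma isCompact_unitSphere (n : ℕ) : IsCompact (unitSphere n) := by
  refine Metric.isCompact_of_isClosed_isBounded (isClosed_eq (by fun_prop) continuous_const) ?_
  refine (Metric.isBounded_closedBall (x := 0) (r := 1)).subset fun x hx => ?_
  rw [mem_closedBall_zero_iff, pi_norm_le_iff_of_nonneg zero_le_one]
  intro i
  rw [Real.norm_eq_abs, ← sq_le_one_iff_abs_le_one]
  exact hx ▸ single_le_sum (fun j _ => sq_nonneg (x j)) (mem_univ i)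

lemma neg_mem_unitSphere {x : Fin n → ℝ} (hx : x ∈ unitSphere n) : -x ∈ unitSphere n := by
  simpa [unitSphere] using hx

lemma ne_zero_of_mem_unitSphere {x : Fin n → ℝ} (hx : x ∈ unitSphere n) : x ≠ 0 := by
  rintro rfl
  simp [unitSphere] at hx

lemma exists_pos_smul_mem_unitSphere {x : Fin n → ℝ} (hx : x ≠ 0) :
    ∃ r : ℝ, 0 < r ∧ r • x ∈ unitSphere n := by
  have hq : 0 < ∑ j, x j ^ 2 := by
    obtain ⟨j, hj⟩ := Function.ne_iff.mp hx
    exact sum_pos' (fun j _ => sq_nonneg _) ⟨j, mem_univ j, pow_two_pos_of_ne_zero hj⟩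
  refine ⟨(√(∑ j, x j ^ 2))⁻¹, by positivity, ?_⟩
  simp [unitSphere, mul_pow, ← mul_sum, inv_pow, Real.sq_sqrt hq.le, hq.ne']

lemma hasLineDerivAt_sum_sq (x v : Fin n → ℝ) :
    HasLineDerivAt ℝ (fun y : Fin n → ℝ => ∑ j, y j ^ 2) (2 * ∑ j, x j * v j) x v := by
  unfold HasLineDerivAt
  rw [mul_sum]
  refine HasDerivAt.fun_sum fun j _ => ?_
  have hline : HasDerivAt (fun t : ℝ => x j + t * v j) (v j) 0 := by
    simpa using ((hasDerivAt_id (0:ℝ)).mul_const (v j)).const_add (x j)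
  exact (hline.fun_pow 2).congr_deriv (by simp; ring)

end UnitSphere

lemma polyT_eq_zero_of_eqOn_unitSphere {M n : ℕ} (hM : M ≠ 0) {A : (Fin M → Fin n) → ℝ}
    (h : ∀ u ∈ unitSphere n, polyT A u = 0) (x : Fin n → ℝ) : polyT A x = 0 := by
  rcases eq_or_ne x 0 with rfl | hx
  · exact polyT_zero hM A
  obtain ⟨r, hr, hrx⟩ := exists_pos_smul_mem_unitSphere hx
  have hrx0 := h _ hrx
  rw [polyT_smul] at hrx0
  exact (mul_eq_zero.mp hrx0).resolve_left (pow_ne_zero _ hr.ne')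

lemma IsP0Tensor.nonneg_of_contrT_eq_smul {M n : ℕ} {A : (Fin (M+1) → Fin n) → ℝ}
    (hA : IsP0Tensor A) {x : Fin n → ℝ} (hx : x ≠ 0) {μ : ℝ}
    (h : ∀ i, contrT A x i = μ * x i) : 0 ≤ μ := by
  obtain ⟨i, hi, hnn⟩ := hA x hx
  rw [h i, mul_left_comm] at hnn
  exact nonneg_of_mul_nonneg_left hnn (mul_self_pos.mpr hi)

namespace IsSymmTensor

variable {M n : ℕ} {A : (Fin (M+1) → Fin n) → ℝ}

lemma exists_contrT_eq_smul_of_isLocalExtrOn (hA : IsSymmTensor A) {x : Fin n → ℝ} (hx : x ≠ 0)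
    (hext : IsLocalExtrOn (polyT A) {y | ∑ j, y j ^ 2 = ∑ j, x j ^ 2} x) :
    ∃ μ : ℝ, ∀ i, contrT A x i = μ * x i := by
  have hg := (by fun_prop : ContDiff ℝ 1 fun y : Fin n → ℝ => ∑ j, y j ^ 2).hasStrictFDerivAt
    one_ne_zero (x := x)
  have hf := (contDiff_polyT A).hasStrictFDerivAt one_ne_zero (x := x)
  obtain ⟨a, b, hab, hlin⟩ := hext.exists_multipliers_of_hasStrictFDerivAt_1d hg hf
  have hi (i : Fin n) : a * (2 * x i) + b * ((M + 1) * contrT A x i) = 0 := by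
    have hg' := (hg.hasFDerivAt.hasLineDerivAt _).unique (hasLineDerivAt_sum_sq x (Pi.single i 1))
    have hf' :=
      (hf.hasFDerivAt.hasLineDerivAt _).unique (hA.hasLineDerivAt_polyT x (Pi.single i 1))
    simpa [hg', hf', Pi.single_apply] using congrArg (· (Pi.single i 1)) hlin
  have hb : b ≠ 0 := by
    rintro rfl
    have ha : a ≠ 0 := by simpa using hab
    exact hx (funext fun i => by simpa [ha] using hi i)
  refine ⟨-(2 * a) / (b * (M + 1)), fun i => ?_⟩
  field_simp
  linarith [hi i]

lemma polyT_nonneg_of_isMinOn (hA : IsSymmTensor A) (hP0 : IsP0Tensor A) {a : Fin n → ℝ}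
    (ha : a ∈ unitSphere n) (hmin : IsMinOn (polyT A) (unitSphere n) a) : 0 ≤ polyT A a := by
  have ha0 := ne_zero_of_mem_unitSphere ha
  have hext : IsLocalExtrOn (polyT A) {y | ∑ j, y j ^ 2 = ∑ j, a j ^ 2} a := by
    rw [show ∑ j, a j ^ 2 = 1 from ha]
    exact hmin.isExtr.localize
  obtain ⟨μ, hμ⟩ := hA.exists_contrT_eq_smul_of_isLocalExtrOn ha0 hext
  have hμ0 := hP0.nonneg_of_contrT_eq_smul ha0 hμ
  rw [polyT_eq_sum_mul_contrT]
  exact sum_nonneg fun i _ => by rw [hμ i, mul_left_comm]; exact mul_nonneg hμ0 (mul_self_nonneg _)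

end IsSymmTensor

theorem stmt7 (m n : ℕ) (hm : Odd (m + 1))
    (A : (Fin (m+1) → Fin n) → ℝ)
    (hsym : ∀ (σ : Equiv.Perm (Fin (m+1))) (f : Fin (m+1) → Fin n), A (f ∘ σ) = A f)
    (hP0 : IsP0Tensor A) :
    A = 0 := by
  have hA : IsSymmTensor A := hsym
  refine hA.eq_zero_of_polyT_eq_zero (polyT_eq_zero_of_eqOn_unitSphere m.succ_ne_zero ?_)
  intro u hu
  obtain ⟨a, ha, hmin⟩ :=
    (isCompact_unitSphere n).exists_isMinOn ⟨u, hu⟩ (contDiff_polyT A).continuous.continuousOn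
  have hmin_nonneg := hA.polyT_nonneg_of_isMinOn hP0 ha hmin
  have hu_ge : polyT A a ≤ polyT A u := hmin hu
  have hneg_ge : polyT A a ≤ polyT A (-u) := hmin (neg_mem_unitSphere hu)
  rw [polyT_neg_of_odd hm] at hneg_ge
  linarith
end
end

section
/- Every principal sub-tensor of a P tensor is a P tensor; every principal sub-tensor of a P_0 tensor is a P_0 tensor. In particular, all diagonal entries a_{i...i} of a P tensor are positive, and of a P_0 tensor are nonnegative. -/
open Finset

noncomputable section

/-!
Extending `x ∈ ℝ^J` by zero to `x̃ ∈ ℝ^n` gives `(A^J x^{m-1})_i = (A x̃^{m-1})_i` for `i ∈ J`,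
since every other term contains a vanishing factor of `x̃`. An index `i` with
`x̃_i (A x̃^{m-1})_i > 0` (or `≥ 0` with `x̃_i ≠ 0`) has `x̃_i ≠ 0`, so it lies in `J` and serves
for `x`. The diagonal entry `a_{i…i}` is the one-dimensional principal sub-tensor for `J = {i}`.
-/

/-- The principal sub-tensor `A^J` for `J = range e`, indexed through the injection `e`. -/
def principalSubtensor {m n r : ℕ} (A : (Fin (m+1) → Fin n) → ℝ) (e : Fin r → Fin n) :
    (Fin (m+1) → Fin r) → ℝ :=
  fun f => A (e ∘ f)

section PrincipalSubtensor

variable {m n r : ℕ} {A : (Fin (m+1) → Fin n) → ℝ} {e : Fin r → Fin n}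

lemma extend_ne_zero (he : Function.Injective e) {x : Fin r → ℝ} (hx : x ≠ 0) :
    Function.extend e x 0 ≠ 0 := by
  rintro hy
  exact hx (funext fun i => by simpa [he.extend_apply] using congrFun hy (e i))

lemma exists_eq_of_extend_ne_zero {x : Fin r → ℝ} {j : Fin n}
    (hj : Function.extend e x 0 j ≠ 0) : ∃ i, e i = j := by
  by_contra hne
  exact hj (Function.extend_apply' x (0 : Fin n → ℝ) j hne)

lemma contrT_principalSubtensor (he : Function.Injective e) (x : Fin r → ℝ) (i : Fin r) :
    contrT (principalSubtensor A e) x i = contrT A (Function.extend e x 0) (e i) := by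
  refine Fintype.sum_of_injective (fun f => e ∘ f) he.comp_left _ _ ?_ fun f => ?_
  · rintro g hg
    obtain ⟨k, hk⟩ : ∃ k, ¬ ∃ a, e a = g k := by
      by_contra! hall
      choose f hf using hall
      exact hg ⟨f, funext hf⟩
    rw [Finset.prod_eq_zero (Finset.mem_univ k) (Function.extend_apply' x (0 : Fin n → ℝ) _ hk),
      mul_zero]
  · simp only [principalSubtensor, Fin.comp_cons, Function.comp_apply, he.extend_apply]

lemma IsPTensor.principalSubtensor (hA : IsPTensor A) (he : Function.Injective e) :
    IsPTensor (principalSubtensor A e) := by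
  intro x hx
  obtain ⟨j, hj⟩ := hA _ (extend_ne_zero he hx)
  obtain ⟨i, rfl⟩ := exists_eq_of_extend_ne_zero (left_ne_zero_of_mul (ne_of_gt hj))
  refine ⟨i, ?_⟩
  rwa [contrT_principalSubtensor he, ← he.extend_apply x 0 i]

lemma IsP0Tensor.principalSubtensor (hA : IsP0Tensor A) (he : Function.Injective e) :
    IsP0Tensor (principalSubtensor A e) := by
  intro x hx
  obtain ⟨j, hj0, hj⟩ := hA _ (extend_ne_zero he hx)
  obtain ⟨i, rfl⟩ := exists_eq_of_extend_ne_zero hj0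
  refine ⟨i, ?_, ?_⟩
  · rwa [← he.extend_apply x 0 i]
  · rwa [contrT_principalSubtensor he, ← he.extend_apply x 0 i]

end PrincipalSubtensor

lemma contrT_one_of_dim_one {m : ℕ} (A : (Fin (m+1) → Fin 1) → ℝ) :
    contrT A 1 0 = A (fun _ => 0) := by
  simp only [contrT, Pi.one_apply, Finset.prod_const_one, mul_one, Fintype.sum_unique]
  exact congrArg A (Subsingleton.elim _ _)

section Diagonal

variable {m n : ℕ} {A : (Fin (m+1) → Fin n) → ℝ}

lemma principalSubtensor_diag (i : Fin n) :
    contrT (principalSubtensor A fun _ : Fin 1 => i) 1 0 = A (fun _ => i) :=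
  contrT_one_of_dim_one _

lemma IsPTensor.diag_pos (hA : IsPTensor A) (i : Fin n) : 0 < A (fun _ => i) := by
  obtain ⟨j, hj⟩ := hA.principalSubtensor (e := fun _ : Fin 1 => i)
    (Function.injective_of_subsingleton _) 1 one_ne_zero
  rwa [Subsingleton.elim j 0, Pi.one_apply, one_mul, principalSubtensor_diag] at hj

lemma IsP0Tensor.diag_nonneg (hA : IsP0Tensor A) (i : Fin n) : 0 ≤ A (fun _ => i) := by
  obtain ⟨j, -, hj⟩ := hA.principalSubtensor (e := fun _ : Fin 1 => i)
    (Function.injective_of_subsingleton _) 1 one_ne_zero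
  rwa [Subsingleton.elim j 0, Pi.one_apply, one_mul, principalSubtensor_diag] at hj

end Diagonal

theorem stmt10 (m n r : ℕ)
    (A : (Fin (m+1) → Fin n) → ℝ)
    (e : Fin r → Fin n) (he : Function.Injective e) :
    (IsPTensor A →
      IsPTensor (fun f : Fin (m+1) → Fin r => A (e ∘ f)) ∧
        ∀ i : Fin n, 0 < A (fun _ => i)) ∧
    (IsP0Tensor A →
      IsP0Tensor (fun f : Fin (m+1) → Fin r => A (e ∘ f)) ∧
        ∀ i : Fin n, 0 ≤ A (fun _ => i)) :=
  ⟨fun hA => ⟨hA.principalSubtensor he, hA.diag_pos⟩,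
    fun hA => ⟨hA.principalSubtensor he, hA.diag_nonneg⟩⟩
end
end

section
/- A tensor A in T_{m,n} is a P tensor if and only if for each nonzero x in R^n there exists a positive diagonal n x n matrix D_x such that x^T D_x (A x^{m-1}) > 0. -/
open Finset

noncomputable section

theorem exists_pos_iff_exists_pos_weighted_sum_pos {ι : Type*} [Fintype ι] (a : ι → ℝ) :
    (∃ i, 0 < a i) ↔ ∃ d : ι → ℝ, (∀ i, 0 < d i) ∧ 0 < ∑ i, d i * a i := by
  classical
  constructor
  · rintro ⟨i₀, hi₀⟩
    set S := ∑ i, a i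
    obtain ⟨t, ht, hpos⟩ : ∃ t > 0, 0 < t * S + a i₀ := by
      have hcont : Continuous fun t : ℝ => t * S + a i₀ := by fun_prop
      have hlim := (hcont.tendsto' 0 (a i₀) (by simp)).mono_left
        (nhdsWithin_le_nhds (s := Set.Ioi 0))
      exact (eventually_mem_nhdsWithin.and (hlim.eventually (lt_mem_nhds hi₀))).exists
    -- with these weights the sum is `t * S + a i₀`
    refine ⟨fun i => t + (Pi.single i₀ 1 : ι → ℝ) i, fun i => ?_, ?_⟩
    · exact add_pos_of_pos_of_nonneg ht
        ((Pi.single_nonneg.2 zero_le_one : (0 : ι → ℝ) ≤ Pi.single i₀ 1) i)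
    · simpa [add_mul, sum_add_distrib, ← mul_sum, Pi.single_apply] using hpos
  · rintro ⟨d, hd, hsum⟩
    obtain ⟨i, -, hi⟩ :=
      exists_lt_of_sum_lt (by simpa using hsum : ∑ _ : ι, (0 : ℝ) < ∑ i, d i * a i)
    exact ⟨i, pos_of_mul_pos_right hi (hd i).le⟩

theorem stmt11 (m n : ℕ) (A : (Fin (m+1) → Fin n) → ℝ) :
    IsPTensor A ↔
      ∀ x : Fin n → ℝ, x ≠ 0 →
        ∃ d : Fin n → ℝ, (∀ i, 0 < d i) ∧
          0 < ∑ i, x i * (d i * contrT A x i) := by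
  refine forall₂_congr fun x _ => ?_
  simpa only [mul_left_comm (x _)] using
    exists_pos_iff_exists_pos_weighted_sum_pos fun i => x i * contrT A x i
end
end

section
/- If B = (b_{i_1...i_m}) in T_{m,n} is a B tensor, then for each i, b_{i...i} > max{0, b_{i j_2...j_m} : (j_2,...,j_m) != (i,...,i)}; if B is a B_0 tensor then the same holds with >=. -/
open Finset

noncomputable section

/-! Summing the row `i` of `B` shows that its diagonal entry cannot lie below the row mean
`n⁻ᵐ ∑_f b_{i f}` when all other entries lie at or below it; the claims then follow from the
defining inequalities of B and B₀ tensors. -/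

theorem mean_le_of_forall_ne_le_mean {K ι : Type*} [Field K] [LinearOrder K]
    [IsStrictOrderedRing K] [Fintype ι] (f : ι → K) (a : ι)
    (h : ∀ j ≠ a, f j ≤ (∑ i, f i) / Fintype.card ι) :
    (∑ i, f i) / Fintype.card ι ≤ f a := by
  by_contra! ha
  have hcard : (Fintype.card ι : K) ≠ 0 := by exact_mod_cast (Fintype.card_pos_iff.mpr ⟨a⟩).ne'
  have hlt := Finset.sum_lt_sum (s := univ) (f := f) (g := fun _ => (∑ i, f i) / Fintype.card ι)
    (fun j _ => by rcases eq_or_ne j a with rfl | hj; exacts [ha.le, h j hj]) ⟨a, mem_univ a, ha⟩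
  simp only [sum_const, card_univ, nsmul_eq_mul, mul_div_cancel₀ _ hcard] at hlt
  exact hlt.false

section Tensor

variable {m n : ℕ} {B : (Fin (m+1) → Fin n) → ℝ}

theorem IsBTensor.isB0Tensor (hB : IsBTensor B) : IsB0Tensor B :=
  fun i => ⟨(hB i).1.le, fun g hg => ((hB i).2 g hg).le⟩

theorem IsB0Tensor.mean_le_diag (hB : IsB0Tensor B) (i : Fin n) :
    1 / (n : ℝ) ^ m * ∑ f : Fin m → Fin n, B (Fin.cons i f) ≤ B (fun _ => i) := by
  have hcard : ((Fintype.card (Fin m → Fin n) : ℕ) : ℝ) = (n : ℝ) ^ m := by simp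
  have hdiag : Fin.cons i (fun _ : Fin m => i) = fun _ : Fin (m+1) => i := by
    funext j; exact Fin.cases rfl (fun _ => rfl) j
  rw [one_div_mul_eq_div, ← hcard, ← hdiag]
  refine mean_le_of_forall_ne_le_mean (fun f => B (Fin.cons i f)) _ fun g hg => ?_
  rw [hcard, ← one_div_mul_eq_div]
  exact (hB i).2 g hg

end Tensor

theorem stmt17 (m n : ℕ) (B : (Fin (m+1) → Fin n) → ℝ) :
    (IsBTensor B → ∀ i : Fin n,
      0 < B (fun _ => i) ∧
        ∀ g : Fin m → Fin n, g ≠ (fun _ => i) → B (Fin.cons i g) < B (fun _ => i)) ∧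
    (IsB0Tensor B → ∀ i : Fin n,
      0 ≤ B (fun _ => i) ∧
        ∀ g : Fin m → Fin n, g ≠ (fun _ => i) → B (Fin.cons i g) ≤ B (fun _ => i)) := by
  refine ⟨fun hB i => ?_, fun hB i => ?_⟩
  · have hdiag := hB.isB0Tensor.mean_le_diag i
    have hn : (0 : ℝ) < (n : ℝ) ^ m := pow_pos (Nat.cast_pos.mpr i.pos) m
    have hmean := mul_pos (one_div_pos.mpr hn) (hB i).1
    exact ⟨hmean.trans_le hdiag, fun g hg => ((hB i).2 g hg).trans_le hdiag⟩
  · have hdiag := hB.mean_le_diag i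
    have hmean := mul_nonneg (one_div_nonneg.mpr (by positivity : (0 : ℝ) ≤ (n : ℝ) ^ m)) (hB i).1
    exact ⟨hmean.trans hdiag, fun g hg => ((hB i).2 g hg).trans hdiag⟩
end
end

section
/- Let B = (b_{i_1...i_m}) in T_{m,n} be a Z tensor (all off-diagonal entries nonpositive). Then the following are equivalent: (i) B is a B tensor; (ii) for each i, sum over i_2,...,i_m of b_{i i_2...i_m} > 0; (iii) B is strictly diagonally dominated, i.e., b_{i...i} > sum of |b_{i i_2...i_m}| over all (i_2,...,i_m) != (i,...,i), for each i. The analogous equivalence holds between B_0 tensors, nonnegative row sums, and diagonal dominance with >=. -/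
open Finset

noncomputable section

/- For a Z tensor the off-diagonal entries of row `i` are `≤ 0`, whereas the bound in the
B (B₀) condition is a positive multiple of the row sum; so that condition reduces to the sign of
the row sums. Each row sum is `b_{i…i}` minus the sum of the absolute values of the off-diagonal
entries, which turns the sign of the row sum into diagonal dominance. -/

theorem Fin.cons_eq_const_iff {m : ℕ} {α : Type*} {i j : α} {g : Fin m → α} :
    (Fin.cons i g : Fin (m+1) → α) = (fun _ => j) ↔ i = j ∧ g = fun _ => j := by
  rw [← Fin.cons_self_tail (fun _ : Fin (m+1) => j), Fin.cons_inj]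
  rfl

theorem Finset.sum_cons_eq_add_sum_filter_ne {m : ℕ} {α M : Type*} [Fintype α] [DecidableEq α]
    [AddCommMonoid M] (B : (Fin (m+1) → α) → M) (i : α) :
    ∑ f : Fin m → α, B (Fin.cons i f) =
      B (fun _ => i) + ∑ f ∈ univ.filter (fun f : Fin m → α => f ≠ fun _ => i), B (Fin.cons i f) := by
  rw [filter_ne', ← add_sum_erase _ _ (mem_univ (fun _ => i)),
    Fin.cons_eq_const_iff.mpr ⟨rfl, rfl⟩]

def IsZTensor {m n : ℕ} (B : (Fin (m+1) → Fin n) → ℝ) : Prop :=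
  ∀ f : Fin (m+1) → Fin n, (¬ ∃ i : Fin n, f = fun _ => i) → B f ≤ 0

namespace IsZTensor

variable {m n : ℕ} {B : (Fin (m+1) → Fin n) → ℝ}

theorem apply_cons_nonpos (hZ : IsZTensor B) {i : Fin n} {g : Fin m → Fin n}
    (hg : g ≠ fun _ => i) : B (Fin.cons i g) ≤ 0 :=
  hZ _ fun ⟨j, hj⟩ => hg <| by
    obtain ⟨rfl, rfl⟩ := Fin.cons_eq_const_iff.mp hj
    rfl

theorem sum_abs_offDiag (hZ : IsZTensor B) (i : Fin n) :
    ∑ f ∈ univ.filter (fun f : Fin m → Fin n => f ≠ fun _ => i), |B (Fin.cons i f)| =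
      -∑ f ∈ univ.filter (fun f : Fin m → Fin n => f ≠ fun _ => i), B (Fin.cons i f) := by
  rw [← sum_neg_distrib]
  exact sum_congr rfl fun f hf => abs_of_nonpos (hZ.apply_cons_nonpos (mem_filter.mp hf).2)

theorem sum_abs_offDiag_lt_iff (hZ : IsZTensor B) (i : Fin n) :
    ∑ f ∈ univ.filter (fun f : Fin m → Fin n => f ≠ fun _ => i), |B (Fin.cons i f)| <
      B (fun _ => i) ↔ 0 < ∑ f : Fin m → Fin n, B (Fin.cons i f) := by
  rw [hZ.sum_abs_offDiag, sum_cons_eq_add_sum_filter_ne, neg_lt_iff_pos_add]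

theorem sum_abs_offDiag_le_iff (hZ : IsZTensor B) (i : Fin n) :
    ∑ f ∈ univ.filter (fun f : Fin m → Fin n => f ≠ fun _ => i), |B (Fin.cons i f)| ≤
      B (fun _ => i) ↔ 0 ≤ ∑ f : Fin m → Fin n, B (Fin.cons i f) := by
  rw [hZ.sum_abs_offDiag, sum_cons_eq_add_sum_filter_ne, neg_le_iff_add_nonneg]

theorem isBTensor_iff (hZ : IsZTensor B) :
    IsBTensor B ↔ ∀ i : Fin n, 0 < ∑ f : Fin m → Fin n, B (Fin.cons i f) := by
  refine ⟨fun h i => (h i).1, fun h i => ⟨h i, fun g hg => ?_⟩⟩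
  have hn : (0 : ℝ) < n := mod_cast i.pos
  exact (hZ.apply_cons_nonpos hg).trans_lt (mul_pos (by positivity) (h i))

theorem isB0Tensor_iff (hZ : IsZTensor B) :
    IsB0Tensor B ↔ ∀ i : Fin n, 0 ≤ ∑ f : Fin m → Fin n, B (Fin.cons i f) := by
  refine ⟨fun h i => (h i).1, fun h i => ⟨h i, fun g hg => ?_⟩⟩
  exact (hZ.apply_cons_nonpos hg).trans (mul_nonneg (by positivity) (h i))

end IsZTensor

open scoped Classical in
theorem stmt19 (m n : ℕ) (B : (Fin (m+1) → Fin n) → ℝ)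
    (hZ : ∀ f : Fin (m+1) → Fin n, (¬ ∃ i : Fin n, f = fun _ => i) → B f ≤ 0) :
    ((IsBTensor B ↔ ∀ i : Fin n, 0 < ∑ f : Fin m → Fin n, B (Fin.cons i f)) ∧
     (IsBTensor B ↔ ∀ i : Fin n,
        (∑ f ∈ Finset.univ.filter (fun f : Fin m → Fin n => f ≠ (fun _ => i)),
          |B (Fin.cons i f)|) < B (fun _ => i))) ∧
    ((IsB0Tensor B ↔ ∀ i : Fin n, 0 ≤ ∑ f : Fin m → Fin n, B (Fin.cons i f)) ∧
     (IsB0Tensor B ↔ ∀ i : Fin n,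
        (∑ f ∈ Finset.univ.filter (fun f : Fin m → Fin n => f ≠ (fun _ => i)),
          |B (Fin.cons i f)|) ≤ B (fun _ => i))) := by
  have hZ : IsZTensor B := hZ
  refine ⟨⟨hZ.isBTensor_iff, hZ.isBTensor_iff.trans ?_⟩,
    ⟨hZ.isB0Tensor_iff, hZ.isB0Tensor_iff.trans ?_⟩⟩
  · exact forall_congr' fun i => (hZ.sum_abs_offDiag_lt_iff i).symm
  · exact forall_congr' fun i => (hZ.sum_abs_offDiag_le_iff i).symm
end
end
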